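/- For every s ∈ (0,1/2], one has s / I(s)² ≥ 1 / (2 s log(1/s)). -/

import Mathlib

open MeasureTheory Real Filter Topology
open scoped ENNReal RealInnerProductSpace

noncomputable section

def gaussMeasure (n : ℕ) : Measure (EuclideanSpace ℝ (Fin n)) :=
  (volume : Measure (EuclideanSpace ℝ (Fin n))).withDensity
    fun x => ENNReal.ofReal ((2 * Real.pi) ^ (-(n : ℝ) / 2) * Real.exp (-‖x‖ ^ 2 / 2))

def gaussMedian (n : ℕ) (u : EuclideanSpace ℝ (Fin n) → ℝ) : ℝ :=
  sInf {t : ℝ | gaussMeasure n {x | t < u x} ≤ 1 / 2}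

def gaussMean (n : ℕ) (u : EuclideanSpace ℝ (Fin n) → ℝ) : ℝ :=
  ∫ x, u x ∂(gaussMeasure n)

def IsWeakOU (n : ℕ) (u f : EuclideanSpace ℝ (Fin n) → ℝ) : Prop :=
  ContDiff ℝ 1 u ∧ MemLp u 2 (gaussMeasure n) ∧
  MemLp (fun x => ‖gradient u x‖) 2 (gaussMeasure n) ∧
  MemLp f 2 (gaussMeasure n) ∧
  ∀ φ : EuclideanSpace ℝ (Fin n) → ℝ, ContDiff ℝ (⊤ : ℕ∞) φ → HasCompactSupport φ →
    ∫ x, ⟪gradient u x, gradient φ x⟫ ∂(gaussMeasure n)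
      = -∫ x, φ x * f x ∂(gaussMeasure n)

noncomputable section

/-- convex envelope of exp(t^β) on [0,∞) -/
def convexEnvExp (β : ℝ) (t : ℝ) : ℝ :=
  sSup {y : ℝ | ∃ g : ℝ → ℝ, ConvexOn ℝ (Set.Ici 0) g ∧
    (∀ s : ℝ, 0 ≤ s → g s ≤ Real.exp (s ^ β)) ∧ y = g t}

def IsYoung (B : ℝ → ℝ) : Prop :=
  ConvexOn ℝ (Set.Ici 0) B ∧ B 0 = 0 ∧ ∀ t : ℝ, 0 ≤ t → 0 ≤ B t

def ouLaplacian (n : ℕ) (u : EuclideanSpace ℝ (Fin n) → ℝ) (x : EuclideanSpace ℝ (Fin n)) : ℝ :=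
  ∑ i : Fin n, iteratedFDeriv ℝ 2 u x ![EuclideanSpace.single i 1, EuclideanSpace.single i 1]

def ouOp (n : ℕ) (u : EuclideanSpace ℝ (Fin n) → ℝ) (x : EuclideanSpace ℝ (Fin n)) : ℝ :=
  ouLaplacian n u x - ⟪x, gradient u x⟫

def gaussPhi (t : ℝ) : ℝ := (Real.sqrt (2 * Real.pi))⁻¹ * ∫ τ in Set.Ioi t, Real.exp (-τ ^ 2 / 2)

def gaussPhiInv (s : ℝ) : ℝ := sInf {t : ℝ | gaussPhi t ≤ s}

def isoI (s : ℝ) : ℝ :=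
  if s ∈ Set.Ioo (0 : ℝ) 1 then (Real.sqrt (2 * Real.pi))⁻¹ * Real.exp (-(gaussPhiInv s) ^ 2 / 2)
  else 0

def Thet (s : ℝ) : ℝ := ∫ r in Set.Ioc s (1/2 : ℝ), (isoI r ^ 2)⁻¹

def ThetInv (t : ℝ) : ℝ := sSup {s : ℝ | 0 < s ∧ s ≤ 1/2 ∧ t ≤ Thet s}

def Lam (s : ℝ) : ℝ := (∫ r in Set.Ioc s (1/2 : ℝ), Thet r) + s * Thet s

def gaussRearr (n : ℕ) (f : EuclideanSpace ℝ (Fin n) → ℝ) (s : ℝ) : ℝ :=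
  sInf {t : ℝ | 0 ≤ t ∧ gaussMeasure n {x | t < |f x|} ≤ ENNReal.ofReal s}

def signedRearr (n : ℕ) (u : EuclideanSpace ℝ (Fin n) → ℝ) (s : ℝ) : ℝ :=
  sInf {t : ℝ | gaussMeasure n {x | t < u x} ≤ ENNReal.ofReal s}

def orliczDualNorm (B : ℝ → ℝ) (a b : ℝ) (h : ℝ → ℝ) : ℝ≥0∞ :=
  sSup {y : ℝ≥0∞ | ∃ v : ℝ → ℝ, Measurable v ∧ (∀ r, 0 ≤ v r) ∧
    (∫⁻ r in Set.Ioo a b, ENNReal.ofReal (B (v r))) ≤ 1 ∧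
    y = ∫⁻ r in Set.Ioo a b, ENNReal.ofReal (h r * v r)}

def youngInv (B : ℝ → ℝ) (t : ℝ) : ℝ := sSup {τ : ℝ | 0 ≤ τ ∧ B τ ≤ t}

def calG (B : ℝ → ℝ) (C s : ℝ) : ℝ :=
  (orliczDualNorm B s (1/2) Thet).toReal + Thet s * s * youngInv B (1/s) + C

def leftInv (b : ℝ → ℝ) (t : ℝ) : ℝ := sInf {τ : ℝ | 0 ≤ τ ∧ t ≤ b τ}

def luxNorm (n : ℕ) (B : ℝ → ℝ) (f : EuclideanSpace ℝ (Fin n) → ℝ) : ℝ :=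
  sInf {lam : ℝ | 0 < lam ∧ (∫⁻ x, ENNReal.ofReal (B (|f x| / lam)) ∂(gaussMeasure n)) ≤ 1}

section AuxIso
open Set

-- abbreviations
def gE (t : ℝ) : ℝ := Real.exp (-t ^ 2 / 2)
def gA : ℝ := (Real.sqrt (2 * Real.pi))⁻¹

lemma gE_pos (t : ℝ) : 0 < gE t := Real.exp_pos _
lemma gA_pos : 0 < gA := by
  unfold gA
  positivity

lemma gE_integrable : Integrable gE := by
  have h := integrable_exp_neg_mul_sq (by norm_num : (0:ℝ) < 1/2)
  apply h.congr
  filter_upwards with x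
  unfold gE; ring_nf

lemma tail_split {x y : ℝ} (h : x ≤ y) :
    ∫ τ in Ioi x, gE τ = (∫ τ in Ioc x y, gE τ) + ∫ τ in Ioi y, gE τ := by
  rw [← setIntegral_union]
  · rw [Ioc_union_Ioi_eq_Ioi h]
  · exact Ioc_disjoint_Ioi le_rfl
  · exact measurableSet_Ioi
  · exact gE_integrable.integrableOn
  · exact gE_integrable.integrableOn

lemma gaussPhi_eq (t : ℝ) : gaussPhi t = gA * ∫ τ in Ioi t, gE τ := rfl

lemma gaussPhi_sub {x y : ℝ} (h : x ≤ y) :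
    gaussPhi x - gaussPhi y = gA * ∫ τ in x..y, gE τ := by
  rw [gaussPhi_eq, gaussPhi_eq, intervalIntegral.integral_of_le h,
    tail_split h]
  ring

lemma gaussPhi_zero : gaussPhi 0 = 1/2 := by
  rw [gaussPhi_eq]
  have : ∫ τ in Ioi (0:ℝ), gE τ = Real.sqrt (π / (1/2)) / 2 := by
    rw [← integral_gaussian_Ioi (1/2)]
    apply setIntegral_congr_fun measurableSet_Ioi
    intro x _; unfold gE; ring_nf
  rw [this]
  have h2 : Real.sqrt (π / (1/2)) = Real.sqrt (2 * π) := by norm_num [mul_comm]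
  rw [h2]
  unfold gA
  rw [inv_mul_eq_div, div_div]
  rw [div_eq_iff]
  · rw [one_div, inv_mul_eq_div, eq_div_iff (by positivity)]
    rw [← Real.sqrt_mul_self (by positivity : (0:ℝ) ≤ 2*π)]
    ring
  · positivity

lemma tail_pos (t : ℝ) : 0 < ∫ τ in Ioi t, gE τ := by
  have h1 : ∫ τ in Ioi t, gE τ ≥ ∫ τ in Ioc t (t+1), gE τ := by
    rw [tail_split (by linarith : t ≤ t + 1)]
    have : 0 ≤ ∫ τ in Ioi (t+1), gE τ :=
      setIntegral_nonneg measurableSet_Ioi (fun x _ => (gE_pos x).le)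
    linarith
  have h2 : 0 < ∫ τ in Ioc t (t+1), gE τ := by
    rw [← intervalIntegral.integral_of_le (by linarith : t ≤ t+1)]
    apply intervalIntegral.intervalIntegral_pos_of_pos_on
    · exact gE_integrable.intervalIntegrable
    · intro x _; exact gE_pos x
    · linarith
  linarith

lemma gaussPhi_pos (t : ℝ) : 0 < gaussPhi t := by
  rw [gaussPhi_eq]; exact mul_pos gA_pos (tail_pos t)

lemma gaussPhi_strictAnti : StrictAnti gaussPhi := by
  intro x y hxy
  have := gaussPhi_sub hxy.le
  have h2 : 0 < ∫ τ in x..y, gE τ := by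
    apply intervalIntegral.intervalIntegral_pos_of_pos_on
    · exact gE_integrable.intervalIntegrable
    · intro u _; exact gE_pos u
    · exact hxy
  nlinarith [gA_pos]

lemma gaussPhi_le_half {t : ℝ} (ht : 0 ≤ t) : gaussPhi t ≤ 1/2 := by
  rcases eq_or_lt_of_le ht with h | h
  · rw [← h, gaussPhi_zero]
  · rw [← gaussPhi_zero]; exact (gaussPhi_strictAnti h).le

lemma hasDerivAt_gaussPhi (t : ℝ) : HasDerivAt gaussPhi (-(gA * gE t)) t := by
  have key : ∀ u : ℝ, gaussPhi u = gaussPhi 0 - gA * ∫ τ in (0:ℝ)..u, gE τ := by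
    intro u
    rcases le_total 0 u with h | h
    · have := gaussPhi_sub h; linarith
    · have := gaussPhi_sub h
      rw [intervalIntegral.integral_symm]
      linarith
  have hd : HasDerivAt (fun u => ∫ τ in (0:ℝ)..u, gE τ) (gE t) t := by
    apply intervalIntegral.integral_hasDerivAt_right
      (gE_integrable.intervalIntegrable)
    · exact gE_integrable.aestronglyMeasurable.stronglyMeasurableAtFilter
    · exact (Real.continuous_exp.comp (by continuity)).continuousAt
  have : HasDerivAt (fun u => gaussPhi 0 - gA * ∫ τ in (0:ℝ)..u, gE τ) (-(gA * gE t)) t := by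
    simpa using ((hd.const_mul gA).const_sub (gaussPhi 0))
  exact this.congr_of_eventuallyEq (by filter_upwards with u; exact key u)

lemma gE_tendsto_zero : Tendsto gE atTop (𝓝 0) := by
  have : Tendsto (fun t : ℝ => -t ^ 2 / 2) atTop atBot := by
    apply Tendsto.atBot_div_const (by norm_num)
    simpa using (tendsto_pow_atTop (by norm_num : 2 ≠ 0)).neg
  exact Real.tendsto_exp_atBot.comp this

lemma integral_mul_gE {t : ℝ} : ∫ τ in Ioi t, τ * gE τ = gE t := by
  have h : ∫ τ in Ioi t, τ * gE τ = 0 - (- gE t) := by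
    apply integral_Ioi_of_hasDerivAt_of_tendsto' (f := fun τ => - gE τ)
    · intro x _
      have : HasDerivAt (fun τ : ℝ => -τ ^ 2 / 2) (-x) x := by
        have := ((hasDerivAt_pow 2 x).neg).div_const 2
        simpa using this.congr_deriv (by ring)
      have := (Real.hasDerivAt_exp (-x^2/2)).comp x this
      simpa [gE, mul_comm, Function.comp_def, Pi.neg_def] using this.neg
    · have h2 := integrable_mul_exp_neg_mul_sq (by norm_num : (0:ℝ) < 1/2)
      apply Integrable.integrableOn
      apply h2.congr
      filter_upwards with x
      unfold gE; ring_nf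
    · simpa using gE_tendsto_zero.neg
  simpa using h

lemma mul_gE_integrable : Integrable (fun τ : ℝ => τ * gE τ) := by
  have h2 := integrable_mul_exp_neg_mul_sq (by norm_num : (0:ℝ) < 1/2)
  apply h2.congr
  filter_upwards with x
  unfold gE; ring_nf

lemma gaussPhi_ub {t : ℝ} (ht : 0 < t) : gaussPhi t ≤ gA * gE t / t := by
  rw [gaussPhi_eq]
  have h1 : ∫ τ in Ioi t, gE τ ≤ ∫ τ in Ioi t, (τ/t) * gE τ := by
    apply setIntegral_mono_on gE_integrable.integrableOn
    · exact ((mul_gE_integrable.integrableOn).div_const t).congr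
        (ae_of_all _ fun x => by ring)
    · exact measurableSet_Ioi
    · intro x hx
      have : (1:ℝ) ≤ x / t := (one_le_div ht).mpr (le_of_lt hx)
      nlinarith [gE_pos x]
  have h2 : ∫ τ in Ioi t, (τ/t) * gE τ = gE t / t := by
    rw [show (fun τ => (τ/t) * gE τ) = fun τ => (τ * gE τ) / t by funext τ; ring]
    rw [integral_div, integral_mul_gE]
  calc gA * ∫ τ in Ioi t, gE τ ≤ gA * (gE t / t) := by
        rw [h2] at h1
        exact mul_le_mul_of_nonneg_left h1 gA_pos.le
    _ = gA * gE t / t := by ring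

lemma one_add_integrableOn {t : ℝ} (ht : 1 ≤ t) :
    IntegrableOn (fun τ : ℝ => (1 + τ⁻¹^2) * gE τ) (Ioi t) := by
  have hmeas : AEStronglyMeasurable (fun τ : ℝ => (1 + τ⁻¹^2) * gE τ)
      (volume.restrict (Ioi t)) := by
    apply Measurable.aestronglyMeasurable
    apply Measurable.mul
    · exact (measurable_const.add ((measurable_id.inv).pow_const 2))
    · exact (Real.measurable_exp.comp (by measurability))
  apply Integrable.mono' ((gE_integrable.const_mul 2).integrableOn) hmeas
  rw [ae_restrict_iff' measurableSet_Ioi]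
  filter_upwards with x hx
  have hx1 : 1 ≤ x := le_trans ht (le_of_lt hx)
  have : x⁻¹^2 ≤ 1 := by
    rw [inv_pow]
    apply inv_le_one_of_one_le₀
    nlinarith
  have hnn : (0:ℝ) ≤ (1 + x⁻¹^2) * gE x := mul_nonneg (by positivity) (gE_pos x).le
  rw [Real.norm_eq_abs, abs_of_nonneg hnn]
  nlinarith [gE_pos x]

lemma integral_one_add_inv_sq_gE {t : ℝ} (ht : 1 ≤ t) :
    ∫ τ in Ioi t, (1 + τ⁻¹^2) * gE τ = gE t / t := by
  have h : ∫ τ in Ioi t, (1 + τ⁻¹^2) * gE τ = 0 - (- gE t / t) := by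
    apply integral_Ioi_of_hasDerivAt_of_tendsto' (f := fun τ => - gE τ / τ)
    · intro x hx
      have hx0 : x ≠ 0 := by intro h; rw [h] at hx; simp at hx; linarith
      have hgE : HasDerivAt gE (-x * gE x) x := by
        have : HasDerivAt (fun τ : ℝ => -τ ^ 2 / 2) (-x) x := by
          have := ((hasDerivAt_pow 2 x).neg).div_const 2
          simpa using this.congr_deriv (by ring)
        have := (Real.hasDerivAt_exp (-x^2/2)).comp x this
        unfold gE
        simpa [gE, mul_comm, Function.comp_def] using this
      have := (hgE.neg.div (hasDerivAt_id x) hx0)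
      apply this.congr_deriv
      simp only [Pi.neg_apply, id]
      field_simp
      ring
    · exact one_add_integrableOn ht
    · have h1 : Tendsto (fun τ : ℝ => gE τ / τ) atTop (𝓝 0) :=
        gE_tendsto_zero.div_atTop tendsto_id
      simpa [neg_div] using h1.neg
  rw [h]
  ring

lemma gaussPhi_lb {t : ℝ} (ht : 1 ≤ t) :
    gA * gE t * t / (t^2 + 1) ≤ gaussPhi t := by
  have ht0 : 0 < t := lt_of_lt_of_le one_pos ht
  have key : gE t / t / (1 + t⁻¹^2) ≤ ∫ τ in Ioi t, gE τ := by
    rw [← integral_one_add_inv_sq_gE ht, ← integral_div]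
    apply setIntegral_mono_on
    · exact (one_add_integrableOn ht).div_const _
    · exact gE_integrable.integrableOn
    · exact measurableSet_Ioi
    · intro x hx
      have hx1 : t ≤ x := le_of_lt hx
      have hx0 : 0 < x := lt_of_lt_of_le ht0 hx1
      rw [div_le_iff₀ (by positivity)]
      have h2 : x⁻¹^2 ≤ t⁻¹^2 := by
        apply pow_le_pow_left₀ (by positivity)
        exact inv_anti₀ ht0 hx1
      nlinarith [gE_pos x]
  have h3 : gE t / t / (1 + t⁻¹^2) = gE t * t / (t^2 + 1) := by
    field_simp
  rw [gaussPhi_eq]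
  calc gA * gE t * t / (t^2+1) = gA * (gE t / t / (1 + t⁻¹^2)) := by rw [h3]; ring
    _ ≤ gA * ∫ τ in Ioi t, gE τ := mul_le_mul_of_nonneg_left key gA_pos.le

lemma exp_neg_le_quad {x : ℝ} (hx : 0 ≤ x) : Real.exp (-x) ≤ 1 - x + x^2/2 := by
  have key : ∀ y ∈ Ici (0:ℝ), (fun z => 1 - z + z^2/2 - Real.exp (-z)) 0 ≤
      (fun z => 1 - z + z^2/2 - Real.exp (-z)) y := by
    have hmono := monotoneOn_of_deriv_nonneg (convex_Ici (0:ℝ))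
      (f := fun z => 1 - z + z^2/2 - Real.exp (-z)) ?_ ?_ ?_
    · intro y hy
      exact hmono (self_mem_Ici) hy hy.out
    · fun_prop
    · fun_prop
    · intro y hy
      rw [interior_Ici] at hy
      have hd : HasDerivAt (fun z : ℝ => 1 - z + z^2/2 - Real.exp (-z))
          (-1 + y + Real.exp (-y)) y := by
        have h1 : HasDerivAt (fun z : ℝ => Real.exp (-z)) (-Real.exp (-y)) y := by
          simpa [Function.comp_def] using (Real.hasDerivAt_exp (-y)).comp y ((hasDerivAt_id y).neg)
        have h2 : HasDerivAt (fun z : ℝ => 1 - z + z^2/2) (-1 + y) y := by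
          have := ((hasDerivAt_pow 2 y).div_const 2)
          have h3 := ((hasDerivAt_const y (1:ℝ)).sub (hasDerivAt_id y)).add this
          apply h3.congr_deriv
          push_cast
          ring
        simpa [Pi.sub_def] using h2.sub h1
      rw [hd.deriv]
      have := Real.add_one_le_exp (-y)
      linarith
  have := key x hx
  simp only [neg_zero, Real.exp_zero] at this
  norm_num at this
  linarith

lemma gE_le_quad {t : ℝ} : gE t ≤ 1 - t^2/2 + t^4/8 := by
  have h := exp_neg_le_quad (x := t^2/2) (by positivity)
  unfold gE
  rw [show -t^2/2 = -(t^2/2) by ring]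
  calc Real.exp (-(t^2/2)) ≤ 1 - t^2/2 + (t^2/2)^2/2 := h
    _ = 1 - t^2/2 + t^4/8 := by ring

lemma gE_ge_lin {t : ℝ} : 1 - t^2/2 ≤ gE t := by
  have h := Real.add_one_le_exp (-(t^2/2))
  unfold gE
  rw [neg_div]
  linarith

lemma gE_anti {x y : ℝ} (hx : 0 ≤ x) (hxy : x ≤ y) : gE y ≤ gE x := by
  unfold gE
  apply Real.exp_le_exp.mpr
  rw [neg_div, neg_div, neg_le_neg_iff]
  have : x^2 ≤ y^2 := by nlinarith
  linarith

lemma integral_gE_ub {c : ℝ} (hc : 0 ≤ c) :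
    ∫ τ in (0:ℝ)..c, gE τ ≤ c - c^3/6 + c^5/40 := by
  have heq : ∫ τ in (0:ℝ)..c, (1 - τ^2/2 + τ^4/8) = c - c^3/6 + c^5/40 := by
    have : ∀ x : ℝ, HasDerivAt (fun τ : ℝ => τ - τ^3/6 + τ^5/40) (1 - x^2/2 + x^4/8) x := by
      intro x
      have h1 := (hasDerivAt_id x).sub ((hasDerivAt_pow 3 x).div_const 6)
      have h2 := h1.add ((hasDerivAt_pow 5 x).div_const 40)
      apply h2.congr_deriv
      push_cast
      ring
    rw [intervalIntegral.integral_eq_sub_of_hasDerivAt (fun x _ => this x)]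
    · norm_num
    · apply Continuous.intervalIntegrable
      continuity
  rw [← heq]
  apply intervalIntegral.integral_mono_on hc (gE_integrable.intervalIntegrable)
  · apply Continuous.intervalIntegrable; continuity
  · intro x _
    exact gE_le_quad

lemma integral_gE_lb {c : ℝ} (hc : 0 ≤ c) :
    c - c^3/6 ≤ ∫ τ in (0:ℝ)..c, gE τ := by
  have heq : ∫ τ in (0:ℝ)..c, (1 - τ^2/2) = c - c^3/6 := by
    have : ∀ x : ℝ, HasDerivAt (fun τ : ℝ => τ - τ^3/6) (1 - x^2/2) x := by
      intro x
      have h1 := (hasDerivAt_id x).sub ((hasDerivAt_pow 3 x).div_const 6)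
      apply h1.congr_deriv
      push_cast
      ring
    rw [intervalIntegral.integral_eq_sub_of_hasDerivAt (fun x _ => this x)]
    · norm_num
    · apply Continuous.intervalIntegrable
      continuity
  rw [← heq]
  apply intervalIntegral.integral_mono_on hc _ (gE_integrable.intervalIntegrable)
  · intro x _
    exact gE_ge_lin
  · apply Continuous.intervalIntegrable; continuity

lemma gaussPhi_taylor (c : ℝ) (hc : 0 ≤ c) :
    1/2 - gA * (c - c^3/6 + c^5/40) ≤ gaussPhi c ∧ gaussPhi c ≤ 1/2 - gA * (c - c^3/6) := by
  have h := gaussPhi_sub hc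
  rw [gaussPhi_zero] at h
  constructor
  · have := mul_le_mul_of_nonneg_left (integral_gE_ub hc) gA_pos.le
    linarith
  · have := mul_le_mul_of_nonneg_left (integral_gE_lb hc) gA_pos.le
    linarith

lemma gA_bounds : 0.398942 ≤ gA ∧ gA ≤ 0.398943 := by
  have hpi1 := Real.pi_gt_d6
  have hpi2 := Real.pi_lt_d2
  have hpi3 := Real.pi_lt_d6
  have h2pi : (6.283184:ℝ) ≤ 2*π ∧ 2*π ≤ 6.283186 := by constructor <;> linarith
  have hs1 : Real.sqrt (2*π) ≤ 2.5066286 := by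
    rw [show (2.5066286:ℝ) = Real.sqrt (2.5066286^2) by
      rw [Real.sqrt_sq (by norm_num)]]
    apply Real.sqrt_le_sqrt
    nlinarith [h2pi.2]
  have hs2 : (2.5066277:ℝ) ≤ Real.sqrt (2*π) := by
    rw [show (2.5066277:ℝ) = Real.sqrt (2.5066277^2) by
      rw [Real.sqrt_sq (by norm_num)]]
    apply Real.sqrt_le_sqrt
    nlinarith [h2pi.1]
  have hpos : 0 < Real.sqrt (2*π) := lt_of_lt_of_le (by norm_num) hs2
  unfold gA
  constructor
  · rw [le_inv_comm₀ (by norm_num) hpos]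
    calc Real.sqrt (2*π) ≤ 2.5066286 := hs1
      _ ≤ (0.398942:ℝ)⁻¹ := by norm_num
  · rw [inv_le_comm₀ hpos (by norm_num)]
    calc (0.398943:ℝ)⁻¹ ≤ 2.5066277 := by norm_num
      _ ≤ Real.sqrt (2*π) := hs2

lemma psi_step {t t₁ t₂ p u₀ q : ℝ} (h1 : t₁ ≤ t) (h2 : t ≤ t₂) (h10 : 0 ≤ t₁)
    (hp : p ≤ gaussPhi t₂) (hp0 : 0 ≤ p)
    (hu : gaussPhi t₁ ≤ u₀^4) (hu0 : 0 < u₀)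
    (hq : gE t₁ ≤ q)
    (hl : 0 ≤ 2 * (4*(1-u₀)) - 1)
    (hnum : t₂ * (0.398943 * q) ≤ p * (2 * (4*(1-u₀)) - 1)) :
    t * (gA * gE t) ≤ gaussPhi t * (2 * Real.log (1/gaussPhi t) - 1) := by
  have hA := gA_bounds
  have hΦt := gaussPhi_pos t
  have hΦ1 := gaussPhi_pos t₁
  -- LHS bound
  have hE : gE t ≤ q := le_trans (gE_anti h10 h1) hq
  have hq0 : 0 ≤ q := le_trans (gE_pos t₁).le hq
  have hlhs : t * (gA * gE t) ≤ t₂ * (0.398943 * q) := by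
    have h0t : 0 ≤ t := le_trans h10 h1
    have : gA * gE t ≤ 0.398943 * q := by
      apply mul_le_mul hA.2 hE (gE_pos t).le (by norm_num)
    apply mul_le_mul h2 this (mul_nonneg gA_pos.le (gE_pos t).le) (by linarith)
  -- log bound
  have hlog : 4*(1-u₀) ≤ Real.log (1/gaussPhi t) := by
    have hstep1 : Real.log (1/gaussPhi t₁) ≤ Real.log (1/gaussPhi t) := by
      apply Real.log_le_log (by positivity)
      apply one_div_le_one_div_of_le hΦt
      rcases eq_or_lt_of_le h1 with h | h
      · rw [h]
      · exact (gaussPhi_strictAnti h).le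
    have hstep2 : 4*(1-u₀) ≤ Real.log (1/gaussPhi t₁) := by
      have hlu : Real.log u₀ ≤ u₀ - 1 := Real.log_le_sub_one_of_pos hu0
      have h4 : Real.log (gaussPhi t₁) ≤ 4 * Real.log u₀ := by
        calc Real.log (gaussPhi t₁) ≤ Real.log (u₀^4) :=
              Real.log_le_log hΦ1 hu
          _ = 4 * Real.log u₀ := by
              rw [Real.log_pow]; push_cast; ring
      rw [one_div, Real.log_inv]
      linarith
    linarith [hstep1, hstep2]
  -- RHS bound
  have hΦ2 : p ≤ gaussPhi t := by
    rcases eq_or_lt_of_le h2 with h | h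
    · rw [h]; exact hp
    · exact le_trans hp (gaussPhi_strictAnti h).le
  calc t * (gA * gE t) ≤ t₂ * (0.398943 * q) := hlhs
    _ ≤ p * (2 * (4*(1-u₀)) - 1) := hnum
    _ ≤ gaussPhi t * (2 * (4*(1-u₀)) - 1) := mul_le_mul_of_nonneg_right hΦ2 hl
    _ ≤ gaussPhi t * (2 * Real.log (1/gaussPhi t) - 1) := by
        apply mul_le_mul_of_nonneg_left _ hΦt.le
        linarith

lemma psi_interval {t t₁ t₂ : ℝ} (h1 : t₁ ≤ t) (h2 : t ≤ t₂) (h10 : 0 ≤ t₁)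
    (u₀ : ℝ) (hu0 : 0 < u₀)
    (hU0 : 0 ≤ t₁ - t₁^3/6) (hV0 : 0 ≤ t₂ - t₂^3/6 + t₂^5/40)
    (hp0 : 0 ≤ 1/2 - 0.398943 * (t₂ - t₂^3/6 + t₂^5/40))
    (hu : 1/2 - 0.398942 * (t₁ - t₁^3/6) ≤ u₀^4)
    (hl : 0 ≤ 2 * (4*(1-u₀)) - 1)
    (hnum : t₂ * (0.398943 * (1 - t₁^2/2 + t₁^4/8)) ≤
      (1/2 - 0.398943 * (t₂ - t₂^3/6 + t₂^5/40)) * (2 * (4*(1-u₀)) - 1)) :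
    t * (gA * gE t) ≤ gaussPhi t * (2 * Real.log (1/gaussPhi t) - 1) := by
  have hA := gA_bounds
  have h20 : 0 ≤ t₂ := le_trans h10 (le_trans h1 h2)
  have htay2 := gaussPhi_taylor t₂ h20
  have htay1 := gaussPhi_taylor t₁ h10
  have hp : 1/2 - 0.398943 * (t₂ - t₂^3/6 + t₂^5/40) ≤ gaussPhi t₂ := by
    nlinarith [htay2.1, hA.2]
  have huu : gaussPhi t₁ ≤ u₀^4 := by
    have : gaussPhi t₁ ≤ 1/2 - 0.398942 * (t₁ - t₁^3/6) := by
      nlinarith [htay1.2, hA.1]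
    linarith
  exact psi_step h1 h2 h10 hp hp0 huu hu0 gE_le_quad hl hnum


-- END
lemma psi_mid {t : ℝ} (ht0 : 0 ≤ t) (ht : t ≤ 1.1) :
    t * (gA * gE t) ≤ gaussPhi t * (2 * Real.log (1/gaussPhi t) - 1) := by
  rcases le_total t 0.2 with h | h
  · exact psi_interval (t₁ := 0) (t₂ := 0.2) (by linarith) h (by norm_num) 0.840897 (by norm_num) (by norm_num) (by norm_num) (by norm_num) (by norm_num) (by norm_num) (by norm_num)
  rcases le_total t 0.35 with h | h
  · exact psi_interval (t₁ := 0.2) (t₂ := 0.35) (by linarith) h (by norm_num) 0.805387 (by norm_num) (by norm_num) (by norm_num) (by norm_num) (by norm_num) (by norm_num) (by norm_num)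
  rcases le_total t 0.5 with h | h
  · exact psi_interval (t₁ := 0.35) (t₂ := 0.5) (by linarith) h (by norm_num) 0.776324 (by norm_num) (by norm_num) (by norm_num) (by norm_num) (by norm_num) (by norm_num) (by norm_num)
  rcases le_total t 0.65 with h | h
  · exact psi_interval (t₁ := 0.5) (t₂ := 0.65) (by linarith) h (by norm_num) 0.745476 (by norm_num) (by norm_num) (by norm_num) (by norm_num) (by norm_num) (by norm_num) (by norm_num)
  rcases le_total t 0.8 with h | h
  · exact psi_interval (t₁ := 0.65) (t₂ := 0.8) (by linarith) h (by norm_num) 0.713351 (by norm_num) (by norm_num) (by norm_num) (by norm_num) (by norm_num) (by norm_num) (by norm_num)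
  rcases le_total t 0.875 with h | h
  · exact psi_interval (t₁ := 0.8) (t₂ := 0.875) (by linarith) h (by norm_num) 0.680854 (by norm_num) (by norm_num) (by norm_num) (by norm_num) (by norm_num) (by norm_num) (by norm_num)
  rcases le_total t 0.95 with h | h
  · exact psi_interval (t₁ := 0.875) (t₂ := 0.95) (by linarith) h (by norm_num) 0.664921 (by norm_num) (by norm_num) (by norm_num) (by norm_num) (by norm_num) (by norm_num) (by norm_num)
  rcases le_total t 1.02 with h | h
  · exact psi_interval (t₁ := 0.95) (t₂ := 1.02) (by linarith) h (by norm_num) 0.649550 (by norm_num) (by norm_num) (by norm_num) (by norm_num) (by norm_num) (by norm_num) (by norm_num)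
  rcases le_total t 1.06 with h | h
  · exact psi_interval (t₁ := 1.02) (t₂ := 1.06) (by linarith) h (by norm_num) 0.636022 (by norm_num) (by norm_num) (by norm_num) (by norm_num) (by norm_num) (by norm_num) (by norm_num)
  rcases le_total t 1.085 with h | h
  · exact psi_interval (t₁ := 1.06) (t₂ := 1.085) (by linarith) h (by norm_num) 0.628780 (by norm_num) (by norm_num) (by norm_num) (by norm_num) (by norm_num) (by norm_num) (by norm_num)
  exact psi_interval (t₁ := 1.085) (t₂ := 1.1) (by linarith) ht (by norm_num) 0.624475 (by norm_num) (by norm_num) (by norm_num) (by norm_num) (by norm_num) (by norm_num) (by norm_num)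

lemma sqrt_two_pi_lb : (2.5066277:ℝ) ≤ Real.sqrt (2*π) := by
  have hpi1 := Real.pi_gt_d6
  rw [show (2.5066277:ℝ) = Real.sqrt (2.5066277^2) by
    rw [Real.sqrt_sq (by norm_num)]]
  apply Real.sqrt_le_sqrt
  nlinarith

lemma psi_large {t : ℝ} (ht : 1.1 ≤ t) :
    t * (gA * gE t) ≤ gaussPhi t * (2 * Real.log (1/gaussPhi t) - 1) := by
  have ht1 : (1:ℝ) ≤ t := by linarith
  have ht0 : (0:ℝ) < t := by linarith
  have hΦ := gaussPhi_pos t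
  have hub := gaussPhi_ub ht0
  have hlb := gaussPhi_lb ht1
  have hgE := gE_pos t
  have hgA := gA_pos
  set B : ℝ := Real.sqrt (2*π) with hB
  have hBpos : 0 < B := lt_of_lt_of_le (by norm_num) sqrt_two_pi_lb
  have hgAB : gA = B⁻¹ := rfl
  -- key : log t + log B ≥ 1
  have hkey : 1 ≤ Real.log t + Real.log B := by
    have h1 : Real.exp 1 ≤ t * B := by
      have := Real.exp_one_lt_d9
      nlinarith [sqrt_two_pi_lb]
    calc (1:ℝ) = Real.log (Real.exp 1) := (Real.log_exp 1).symm
      _ ≤ Real.log (t*B) := Real.log_le_log (Real.exp_pos 1) h1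
      _ = Real.log t + Real.log B := Real.log_mul (by positivity) (by positivity)
  -- L lower bound
  have hL : Real.log t + Real.log B + t^2/2 ≤ Real.log (1/gaussPhi t) := by
    have h1 : t / (gA * gE t) ≤ 1 / gaussPhi t := by
      rw [div_le_div_iff₀ (by positivity) hΦ]
      have step : t * gaussPhi t ≤ t * (gA * gE t / t) :=
        mul_le_mul_of_nonneg_left hub (by positivity)
      have : t * (gA * gE t / t) = 1 * (gA * gE t) := by field_simp
      linarith
    calc Real.log t + Real.log B + t^2/2
        = Real.log (t / (gA * gE t)) := by
          rw [Real.log_div (by positivity) (by positivity), Real.log_mul (by positivity) hgE.ne',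
            hgAB, Real.log_inv]
          unfold gE
          rw [Real.log_exp]
          ring
      _ ≤ Real.log (1/gaussPhi t) := Real.log_le_log (by positivity) h1
  have hfac : t^2 + 1 ≤ 2 * Real.log (1/gaussPhi t) - 1 := by nlinarith
  calc t * (gA * gE t) = (gA * gE t * t / (t^2+1)) * (t^2+1) := by field_simp
    _ ≤ gaussPhi t * (t^2+1) := by
        apply mul_le_mul_of_nonneg_right hlb (by positivity)
    _ ≤ gaussPhi t * (2 * Real.log (1/gaussPhi t) - 1) :=
        mul_le_mul_of_nonneg_left hfac hΦ.le

lemma psi_nonneg {t : ℝ} (ht : 0 ≤ t) :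
    t * (gA * gE t) ≤ gaussPhi t * (2 * Real.log (1/gaussPhi t) - 1) := by
  rcases le_total t 1.1 with h | h
  · exact psi_mid ht h
  · exact psi_large h

-- the function g
def gFun (t : ℝ) : ℝ :=
  2 * (gaussPhi t)^2 * Real.log (1/gaussPhi t) - (gA * gE t)^2

lemma hasDerivAt_gE (t : ℝ) : HasDerivAt gE (-t * gE t) t := by
  have h0 : HasDerivAt (fun τ : ℝ => -τ ^ 2 / 2) (-t) t := by
    have := ((hasDerivAt_pow 2 t).neg).div_const 2
    simpa using this.congr_deriv (by ring)
  have := (Real.hasDerivAt_exp (-t^2/2)).comp t h0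
  unfold gE
  simpa [gE, mul_comm, Function.comp_def] using this

lemma hasDerivAt_gFun (t : ℝ) :
    HasDerivAt gFun
      (-2 * (gA * gE t) * (gaussPhi t * (2 * Real.log (1/gaussPhi t) - 1) - t * (gA * gE t))) t := by
  have hΦ := gaussPhi_pos t
  have hΦd := hasDerivAt_gaussPhi t
  have hlog : HasDerivAt (fun u => Real.log (1/gaussPhi u)) (-((-(gA * gE t)) / gaussPhi t)) t := by
    have h1 : HasDerivAt (fun u => Real.log (gaussPhi u)) ((-(gA * gE t)) / gaussPhi t) t := by
      have := (Real.hasDerivAt_log hΦ.ne').comp t hΦd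
      apply this.congr_deriv
      field_simp
    have h2 := h1.neg
    apply h2.congr_of_eventuallyEq
    filter_upwards with u
    rw [one_div, Real.log_inv]
    rfl
  have hsq : HasDerivAt (fun u => 2 * (gaussPhi u)^2) (2 * (2 * gaussPhi t * (-(gA * gE t)))) t := by
    exact ((hΦd.pow 2).const_mul 2).congr_deriv (by push_cast; ring)
  have hmul := hsq.mul hlog
  have hphi2 : HasDerivAt (fun u => (gA * gE u)^2) (2 * (gA * gE t) * (gA * (-t * gE t))) t := by
    exact (((hasDerivAt_gE t).const_mul gA).pow 2).congr_deriv (by push_cast; ring)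
  have := hmul.sub hphi2
  apply this.congr_deriv
  field_simp
  ring

lemma gaussPhi_tendsto_zero : Tendsto gaussPhi atTop (𝓝 0) := by
  have hup : Tendsto (fun x => gA * gE x) atTop (𝓝 0) := by
    simpa using (gE_tendsto_zero.const_mul gA)
  apply tendsto_of_tendsto_of_tendsto_of_le_of_le' (tendsto_const_nhds) hup
  · filter_upwards with x using (gaussPhi_pos x).le
  · filter_upwards [eventually_ge_atTop (1:ℝ)] with x hx
    calc gaussPhi x ≤ gA * gE x / x := gaussPhi_ub (by linarith)
      _ ≤ gA * gE x := by
          rw [div_le_iff₀ (by linarith : (0:ℝ) < x)]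
          nlinarith [mul_pos gA_pos (gE_pos x)]

lemma gFun_tendsto_zero : Tendsto gFun atTop (𝓝 0) := by
  have h1 : Tendsto (fun t => (gA * gE t)^2) atTop (𝓝 0) := by
    have := ((gE_tendsto_zero.const_mul gA).pow 2)
    simpa using this
  have h2 : Tendsto (fun t => 2 * (gaussPhi t)^2 * Real.log (1/gaussPhi t)) atTop (𝓝 0) := by
    have hsqrt : Tendsto (fun t => 4 * (Real.sqrt (gaussPhi t))^3) atTop (𝓝 0) := by
      have hs : Tendsto (fun t => Real.sqrt (gaussPhi t)) atTop (𝓝 0) := by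
        have := (Real.continuous_sqrt.tendsto 0).comp gaussPhi_tendsto_zero
        simpa [Function.comp_def] using this
      have := ((hs.pow 3).const_mul 4)
      simpa using this
    apply tendsto_of_tendsto_of_tendsto_of_le_of_le' tendsto_const_nhds hsqrt
    · filter_upwards [eventually_ge_atTop (0:ℝ)] with t ht
      have hΦ := gaussPhi_pos t
      have hΦh : gaussPhi t ≤ 1/2 := gaussPhi_le_half ht
      have : 0 ≤ Real.log (1/gaussPhi t) := by
        apply Real.log_nonneg
        rw [le_div_iff₀ hΦ]
        linarith
      positivity
    · filter_upwards [eventually_ge_atTop (0:ℝ)] with t ht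
      have hΦ := gaussPhi_pos t
      have hsp : 0 < Real.sqrt (gaussPhi t) := Real.sqrt_pos.mpr hΦ
      have hlog : Real.log (1/gaussPhi t) ≤ 2 / Real.sqrt (gaussPhi t) := by
        have h1 : Real.log (1/Real.sqrt (gaussPhi t)) ≤ 1/Real.sqrt (gaussPhi t) - 1 :=
          Real.log_le_sub_one_of_pos (by positivity)
        have h2 : Real.log (1/gaussPhi t) = 2 * Real.log (1/Real.sqrt (gaussPhi t)) := by
          rw [one_div, one_div, Real.log_inv, Real.log_inv, Real.log_sqrt hΦ.le]
          ring
        have e : 2/Real.sqrt (gaussPhi t) = 2 * (1/Real.sqrt (gaussPhi t)) := by ring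
        rw [h2, e]
        linarith
      have hsq : (gaussPhi t)^2 = (Real.sqrt (gaussPhi t))^4 := by
        rw [show ((Real.sqrt (gaussPhi t))^4 = ((Real.sqrt (gaussPhi t))^2)^2) by ring,
          Real.sq_sqrt hΦ.le]
      calc 2 * (gaussPhi t)^2 * Real.log (1/gaussPhi t)
          ≤ 2 * (gaussPhi t)^2 * (2 / Real.sqrt (gaussPhi t)) := by
            apply mul_le_mul_of_nonneg_left hlog (by positivity)
        _ = 4 * (Real.sqrt (gaussPhi t))^3 := by
            rw [hsq]; field_simp; ring
  have h3 := h2.sub h1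
  unfold gFun
  simpa only [gFun, sub_zero] using h3

lemma gFun_nonneg {t : ℝ} (ht : 0 ≤ t) : 0 ≤ gFun t := by
  have hanti : AntitoneOn gFun (Ici 0) := by
    apply antitoneOn_of_deriv_nonpos (convex_Ici 0)
    · intro x _
      exact (hasDerivAt_gFun x).continuousAt.continuousWithinAt
    · intro x hx
      exact ((hasDerivAt_gFun x).differentiableAt).differentiableWithinAt
    · intro x hx
      rw [interior_Ici] at hx
      rw [(hasDerivAt_gFun x).deriv]
      have hψ := psi_nonneg (le_of_lt hx)
      have hφ : 0 < gA * gE x := mul_pos gA_pos (gE_pos x)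
      nlinarith
  apply le_of_tendsto gFun_tendsto_zero
  filter_upwards [eventually_ge_atTop t] with u hu
  exact hanti ht (le_trans ht hu) hu

-- connection with gaussPhiInv
lemma gaussPhi_surj {s : ℝ} (hs1 : 0 < s) (hs2 : s ≤ 1/2) :
    ∃ T : ℝ, 0 ≤ T ∧ gaussPhi T = s := by
  obtain ⟨x, hx⟩ : ∃ x : ℝ, 0 ≤ x ∧ gaussPhi x ≤ s := by
    have := gaussPhi_tendsto_zero.eventually_le_const hs1
    rcases (this.and (eventually_ge_atTop 0)).exists with ⟨x, hx1, hx2⟩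
    exact ⟨x, hx2, hx1⟩
  have hcont : ContinuousOn gaussPhi (Icc 0 x) := fun u _ =>
    (hasDerivAt_gaussPhi u).continuousAt.continuousWithinAt
  have hmem : s ∈ Icc (gaussPhi x) (gaussPhi 0) := by
    rw [gaussPhi_zero]
    exact ⟨hx.2, hs2⟩
  obtain ⟨T, hT1, hT2⟩ := intermediate_value_Icc' hx.1 hcont hmem
  exact ⟨T, hT1.1, hT2⟩

lemma gaussPhiInv_eq {s T : ℝ} (hT : gaussPhi T = s) : gaussPhiInv s = T := by
  unfold gaussPhiInv
  have hset : {t : ℝ | gaussPhi t ≤ s} = Ici T := by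
    ext t
    simp only [mem_setOf_eq, mem_Ici, ← hT]
    exact ⟨fun h => gaussPhi_strictAnti.le_iff_ge.mp h,
      fun h => gaussPhi_strictAnti.antitone h⟩
  rw [hset, csInf_Ici]

end AuxIso

/-- Lemma: `s / I(s)² ≥ 1 / (2 s log(1/s))` for `s ∈ (0,1/2]`. -/
theorem isoperimetric_inequality_estimate
    (s : ℝ) (hs : s ∈ Set.Ioc (0:ℝ) (1/2)) :
    1 / (2 * s * Real.log (1/s)) ≤ s / isoI s ^ 2 := by
  obtain ⟨hs0, hs2⟩ := hs
  obtain ⟨T, hT0, hTs⟩ := gaussPhi_surj hs0 hs2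
  have hinv : gaussPhiInv s = T := gaussPhiInv_eq hTs
  have hiso : isoI s = gA * gE T := by
    unfold isoI
    have hmem : s ∈ Set.Ioo (0:ℝ) 1 := ⟨hs0, by linarith⟩
    rw [if_pos hmem, hinv]
    rfl
  have hg := gFun_nonneg hT0
  unfold gFun at hg
  rw [hTs] at hg
  have hI : 0 < isoI s := by rw [hiso]; exact mul_pos gA_pos (gE_pos T)
  have hL : 0 < Real.log (1/s) := by
    apply Real.log_pos
    rw [lt_div_iff₀ hs0]
    linarith
  rw [div_le_div_iff₀ (by positivity) (by positivity)]
  rw [hiso]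
  nlinarith [hg]
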